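/- The optimal value Θ(u) := min_{d} (λ(u, d) + ‖d‖²/2) satisfies Θ(u) ≤ 0 for all u, and Θ(u) < 0 if and only if u is not E-Pareto critical. -/
import Mathlib


open scoped RealInnerProductSpace Pointwise

/-- `λ(u, d) := sup { ⟨JΦ(u) d, v⟩ : v ∈ V }`. -/
noncomputable def lam {n m : ℕ}
    (JΦ : EuclideanSpace ℝ (Fin n) → (EuclideanSpace ℝ (Fin n) →L[ℝ] EuclideanSpace ℝ (Fin m)))
    (V : Set (EuclideanSpace ℝ (Fin m)))
    (u d : EuclideanSpace ℝ (Fin n)) : ℝ :=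
  sSup ((fun v => ⟪JΦ u d, v⟫) '' V)

lemma lam_zero {n m : ℕ}
    (JΦ : EuclideanSpace ℝ (Fin n) → (EuclideanSpace ℝ (Fin n) →L[ℝ] EuclideanSpace ℝ (Fin m)))
    (V : Set (EuclideanSpace ℝ (Fin m))) (hVne : V.Nonempty)
    (u : EuclideanSpace ℝ (Fin n)) : lam JΦ V u 0 = 0 := by
  have : (fun v => ⟪(JΦ u) (0 : EuclideanSpace ℝ (Fin n)), v⟫) '' V = {(0:ℝ)} := by
    rw [Set.eq_singleton_iff_nonempty_unique_mem]
    refine ⟨hVne.image _, ?_⟩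
    rintro x ⟨v, _, rfl⟩
    simp
  rw [lam, this, csSup_singleton]

lemma lam_smul {n m : ℕ}
    (JΦ : EuclideanSpace ℝ (Fin n) → (EuclideanSpace ℝ (Fin n) →L[ℝ] EuclideanSpace ℝ (Fin m)))
    (V : Set (EuclideanSpace ℝ (Fin m)))
    (u d : EuclideanSpace ℝ (Fin n)) {t : ℝ} (ht : 0 ≤ t) :
    lam JΦ V u (t • d) = t * lam JΦ V u d := by
  have himg : (fun v => ⟪(JΦ u) (t • d), v⟫) '' V
      = t • ((fun v => ⟪(JΦ u) d, v⟫) '' V) := by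
    rw [← Set.image_smul, Set.image_image]
    apply Set.image_congr'
    intro v
    rw [map_smul]
    simp [real_inner_smul_left, Finset.mul_sum, mul_assoc]
  rw [lam, lam, himg, Real.sSup_smul_of_nonneg ht]
  rfl

/-- the optimal value `Θ(u) = λ(u, ϑ(u)) + ‖ϑ(u)‖²/2` satisfies `Θ(u) ≤ 0`
for all `u`, and `Θ(u) < 0` iff `u` is not E-Pareto critical. -/
theorem optimal_value_nonpos_and_neg_iff_noncritical {n m : ℕ}
    (Φ : EuclideanSpace ℝ (Fin n) → EuclideanSpace ℝ (Fin m))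
    (JΦ : EuclideanSpace ℝ (Fin n) → (EuclideanSpace ℝ (Fin n) →L[ℝ] EuclideanSpace ℝ (Fin m)))
    (hdiff : ∀ u, HasFDerivAt Φ (JΦ u) u)
    (V : Set (EuclideanSpace ℝ (Fin m))) (hVcpt : IsCompact V) (hVne : V.Nonempty)
    (ϑ : EuclideanSpace ℝ (Fin n) → EuclideanSpace ℝ (Fin n))
    (hmin : ∀ u d, lam JΦ V u (ϑ u) + ‖ϑ u‖ ^ 2 / 2 ≤ lam JΦ V u d + ‖d‖ ^ 2 / 2) :
    ∀ u, lam JΦ V u (ϑ u) + ‖ϑ u‖ ^ 2 / 2 ≤ 0 ∧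
      (lam JΦ V u (ϑ u) + ‖ϑ u‖ ^ 2 / 2 < 0 ↔ ¬ ∀ d, 0 ≤ lam JΦ V u d) := by
  intro u
  have hle : lam JΦ V u (ϑ u) + ‖ϑ u‖ ^ 2 / 2 ≤ 0 := by
    have := hmin u 0
    simpa [lam_zero JΦ V hVne u] using this
  refine ⟨hle, ?_, ?_⟩
  · intro hneg hcrit
    have h1 := hcrit (ϑ u)
    have h2 : (0:ℝ) ≤ ‖ϑ u‖ ^ 2 / 2 := by positivity
    linarith
  · intro hnc
    push_neg at hnc
    obtain ⟨d, hd⟩ := hnc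
    have hdne : ‖d‖ ≠ 0 := by
      intro h0
      have : d = 0 := by simpa using h0
      rw [this, lam_zero JΦ V hVne u] at hd
      exact absurd hd (lt_irrefl 0)
    have hdpos : 0 < ‖d‖ := lt_of_le_of_ne (norm_nonneg d) (Ne.symm hdne)
    set l := lam JΦ V u d with hl
    set t : ℝ := -l / ‖d‖ ^ 2 with htdef
    have htpos : 0 < t := div_pos (by linarith) (by positivity)
    have key : lam JΦ V u (t • d) + ‖t • d‖ ^ 2 / 2 = t * (l / 2) := by
      rw [lam_smul JΦ V u d htpos.le, norm_smul, Real.norm_eq_abs, mul_pow, sq_abs, ← hl,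
        htdef]
      field_simp
      ring
    have hlt : t * (l / 2) < 0 :=
      mul_neg_of_pos_of_neg htpos (by linarith)
    calc lam JΦ V u (ϑ u) + ‖ϑ u‖ ^ 2 / 2 ≤ lam JΦ V u (t • d) + ‖t • d‖ ^ 2 / 2 :=
          hmin u _
      _ = t * (l / 2) := key
      _ < 0 := hlt
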